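/- arXiv:2604.24994 — 2 statements merged into one kernel-verified Lean document; each statement's English description precedes it below -/
import Mathlib

section
/- For a set of Voronoi sites in ℝⁿ and a camera point Q, if a point x' of the Voronoi cell of site P' lies strictly between Q and a point x of the Voronoi cell of site P (i.e., x' = λx + (1-λ)Q for some λ ∈ (0,1)), then dist(Q, P') ≤ dist(Q, P). -/
/-!
The power difference `y ↦ ‖y - B‖² - ‖y - A‖² = 2⟪y, A - B⟫ + ‖B‖² - ‖A‖²` is an affine function
of `y`. It is `≥ 0` at `x` (a point of the cell of `A`) and `≤ 0` at `x'` (a point of the cell of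
`B`), so along the ray from `x` through `x'` it stays `≤ 0` beyond `x'`, in particular at the
camera `Q`.
-/

section PowerDifference

variable {E : Type*} [NormedAddCommGroup E] [InnerProductSpace ℝ E]

lemma norm_sub_sq_sub_norm_sub_sq (A B y : E) :
    ‖y - B‖ ^ 2 - ‖y - A‖ ^ 2 = 2 * inner ℝ y (A - B) + (‖B‖ ^ 2 - ‖A‖ ^ 2) := by
  rw [norm_sub_sq_real, norm_sub_sq_real, inner_sub_right]
  ring

lemma norm_sub_sq_sub_norm_sub_sq_smul_add_smul (A B x Q : E) (l : ℝ) :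
    ‖l • x + (1 - l) • Q - B‖ ^ 2 - ‖l • x + (1 - l) • Q - A‖ ^ 2
      = l * (‖x - B‖ ^ 2 - ‖x - A‖ ^ 2) + (1 - l) * (‖Q - B‖ ^ 2 - ‖Q - A‖ ^ 2) := by
  simp only [norm_sub_sq_sub_norm_sub_sq A B, inner_add_left, real_inner_smul_left]
  ring

lemma norm_sub_le_norm_sub_of_smul_add_smul {A B x Q : E} {l : ℝ} (hl0 : 0 ≤ l) (hl1 : l < 1)
    (hx : ‖x - A‖ ≤ ‖x - B‖)
    (hx' : ‖l • x + (1 - l) • Q - B‖ ≤ ‖l • x + (1 - l) • Q - A‖) :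
    ‖Q - B‖ ≤ ‖Q - A‖ := by
  have hx_sq : 0 ≤ ‖x - B‖ ^ 2 - ‖x - A‖ ^ 2 :=
    sub_nonneg.2 (pow_le_pow_left₀ (norm_nonneg _) hx 2)
  have hx'_sq : ‖l • x + (1 - l) • Q - B‖ ^ 2 - ‖l • x + (1 - l) • Q - A‖ ^ 2 ≤ 0 :=
    sub_nonpos.2 (pow_le_pow_left₀ (norm_nonneg _) hx' 2)
  rw [norm_sub_sq_sub_norm_sub_sq_smul_add_smul] at hx'_sq
  have hQ_sq : ‖Q - B‖ ^ 2 - ‖Q - A‖ ^ 2 ≤ 0 := by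
    by_contra! h
    linarith [mul_pos (sub_pos.2 hl1) h, mul_nonneg hl0 hx_sq]
  exact (sq_le_sq₀ (norm_nonneg _) (norm_nonneg _)).1 (sub_nonpos.1 hQ_sq)

end PowerDifference

/-- Painter's ordering for Voronoi diagrams: if a point `x'` of the Voronoi cell of site
`P i'` lies strictly between the camera `Q` and a point `x` of the Voronoi cell of site
`P i`, then `dist Q (P i') ≤ dist Q (P i)`. -/
theorem voronoi_painter {n N : ℕ} (P : Fin N → EuclideanSpace ℝ (Fin n))
    (i i' : Fin N) (Q x x' : EuclideanSpace ℝ (Fin n))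
    (hx : ∀ j, ‖x - P i‖ ≤ ‖x - P j‖)
    (hx' : ∀ j, ‖x' - P i'‖ ≤ ‖x' - P j‖)
    (l : ℝ) (hl : l ∈ Set.Ioo (0:ℝ) 1)
    (hseg : x' = l • x + (1 - l) • Q) :
    dist Q (P i') ≤ dist Q (P i) := by
  subst hseg
  rw [dist_eq_norm, dist_eq_norm]
  exact norm_sub_le_norm_sub_of_smul_add_smul hl.1.le hl.2 (hx i') (hx' i)
end

section
/- Given weighted sites and a camera Q, the relation Π_{P'} <_Q Π_P defined by pow(Q, P') < pow(Q, P) is a strict partial order on the cells, and any total order extending it renders every ray from Q through the cells in a front-to-back order: along any ray from Q, the sequence of cells entered has nondecreasing power distance of their sites from Q. -/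
/-!
Along the ray `s ↦ Q + s • d` the difference of the power distances to two weighted sites
is affine in `s`, since the quadratic terms `s ^ 2 * ‖d‖ ^ 2` cancel. If the first site wins at
`t` and the second at a later `t'`, this affine function is nondecreasing, so it is also
nonpositive at `0 ≤ t`: the first site is at least as close to `Q` in power distance.
-/

open scoped RealInnerProductSpace

section PowerDistance

variable {E : Type*} [NormedAddCommGroup E] [InnerProductSpace ℝ E]

def powerDist (z p : E) (w : ℝ) : ℝ := ‖z - p‖ ^ 2 - w

lemma powerDist_add_smul (z p d : E) (w s : ℝ) :
    powerDist (z + s • d) p w = powerDist z p w + 2 * s * ⟪z - p, d⟫ + s ^ 2 * ‖d‖ ^ 2 := by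
  rw [powerDist, powerDist, show z + s • d - p = (z - p) + s • d by abel, norm_add_sq_real,
    real_inner_smul_right, norm_smul, mul_pow, Real.norm_eq_abs, sq_abs]
  ring

lemma powerDist_add_smul_sub_powerDist_add_smul (z p p' d : E) (w w' s : ℝ) :
    powerDist (z + s • d) p w - powerDist (z + s • d) p' w' =
      powerDist z p w - powerDist z p' w' + 2 * s * ⟪p' - p, d⟫ := by
  have hinner : ⟪p' - p, d⟫ = ⟪z - p, d⟫ - ⟪z - p', d⟫ := by
    rw [← inner_sub_left, sub_sub_sub_cancel_left]
  rw [powerDist_add_smul, powerDist_add_smul, hinner]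
  ring

theorem powerDist_le_of_le_of_le_along_ray {z p p' d : E} {w w' t t' : ℝ}
    (ht : 0 ≤ t) (htt' : t < t')
    (hp : powerDist (z + t • d) p w ≤ powerDist (z + t • d) p' w')
    (hp' : powerDist (z + t' • d) p' w' ≤ powerDist (z + t' • d) p w) :
    powerDist z p w ≤ powerDist z p' w' := by
  rw [← sub_nonpos, powerDist_add_smul_sub_powerDist_add_smul] at hp
  rw [← sub_nonneg, powerDist_add_smul_sub_powerDist_add_smul] at hp'
  have hslope : 0 ≤ ⟪p' - p, d⟫ := by nlinarith
  nlinarith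

end PowerDistance

/-- The painter's relation `pow(Q, P i) < pow(Q, P j)` is a strict partial order on the
cells, and along any ray from the camera `Q` the cells are entered in order of
nondecreasing power distance of their sites from `Q`. -/
theorem painter_order_front_to_back {n N : ℕ}
    (P : Fin N → EuclideanSpace ℝ (Fin n)) (ω : Fin N → ℝ)
    (Q : EuclideanSpace ℝ (Fin n)) :
    (∀ i : Fin N, ¬ (‖Q - P i‖ ^ 2 - ω i < ‖Q - P i‖ ^ 2 - ω i)) ∧
    (∀ i j k : Fin N, ‖Q - P i‖ ^ 2 - ω i < ‖Q - P j‖ ^ 2 - ω j →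
      ‖Q - P j‖ ^ 2 - ω j < ‖Q - P k‖ ^ 2 - ω k →
      ‖Q - P i‖ ^ 2 - ω i < ‖Q - P k‖ ^ 2 - ω k) ∧
    (∀ d : EuclideanSpace ℝ (Fin n), ‖d‖ = 1 → ∀ t t' : ℝ, 0 ≤ t → t < t' →
      ∀ i j : Fin N,
        (∀ k, ‖(Q + t • d) - P i‖ ^ 2 - ω i ≤ ‖(Q + t • d) - P k‖ ^ 2 - ω k) →
        (∀ k, ‖(Q + t' • d) - P j‖ ^ 2 - ω j ≤ ‖(Q + t' • d) - P k‖ ^ 2 - ω k) →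
        ‖Q - P i‖ ^ 2 - ω i ≤ ‖Q - P j‖ ^ 2 - ω j) :=
  ⟨fun _ => lt_irrefl _, fun _ _ _ => lt_trans,
    fun _ _ _ _ ht htt' i j hi hj => powerDist_le_of_le_of_le_along_ray ht htt' (hi j) (hj i)⟩
end
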